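/- Lemma (J₀ is cylindrical on the negative end, the content of Lemma 2.14 with corrected sign/constant conventions): fix ε > 0. For points (θ,t,r,s) ∈ ℝ⁴ with 0 < ‖(t,s)‖ ≤ ε, let J₀ be the linear map with J₀ e_θ = −ε‖(t,s)‖ e_t, J₀ e_t = (ε‖(t,s)‖)⁻¹ e_θ, J₀ e_r = −ε‖(t,s)‖ e_s, J₀ e_s = (ε‖(t,s)‖)⁻¹ e_r. Let Ĵ be the almost-complex structure on the source ℝ⁴ (coordinates (τ,θ,r,φ)) determined by Ĵ ∂_τ = ε⁻¹(cos φ ∂_θ + sin φ ∂_r), Ĵ(cos φ ∂_θ + sin φ ∂_r) = −ε ∂_τ, Ĵ(sin φ ∂_θ − cos φ ∂_r) = ε ∂_φ, and Ĵ ∂_φ = −ε⁻¹(sin φ ∂_θ − cos φ ∂_r). Then for every p = (τ,θ,r,φ) with τ ≤ 0 and every v ∈ ℝ⁴, Dι(p)(Ĵ_p v) = J₀(ι(p))(Dι(p) v); i.e. ι intertwines the cylindrical almost-complex structure Ĵ with J₀, where in particular Ĵ sends ∂_τ to the Reeb vector field ε⁻¹(cos φ ∂_θ + sin φ ∂_r)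 of the contact form α = ε(cos φ dθ + sin φ dr). -/

import Mathlib

noncomputable section

/-- The Liouville-flow embedding `ι(τ,θ,r,φ) = (θ, ε e^τ cos φ, r, ε e^τ sin φ)`,
source coordinates `(τ, θ, r, φ)` (indices `0, 1, 2, 3`), target coordinates
`(θ, t, r, s)` (indices `0, 1, 2, 3`). -/
def iota (ε : ℝ) (p : Fin 4 → ℝ) : Fin 4 → ℝ :=
  ![p 1, ε * Real.exp (p 0) * Real.cos (p 3), p 2, ε * Real.exp (p 0) * Real.sin (p 3)]

/-- The almost-complex structure `J₀` at a target point `q = (θ, t, r, s)`, given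
with `ρ = ε‖(t,s)‖` by `J₀ e_θ = −ρ e_t`, `J₀ e_t = ρ⁻¹ e_θ`, `J₀ e_r = −ρ e_s`,
`J₀ e_s = ρ⁻¹ e_r`. -/
def J0cyl (ε : ℝ) (q : Fin 4 → ℝ) (u : Fin 4 → ℝ) : Fin 4 → ℝ :=
  ![(ε * Real.sqrt ((q 1) ^ 2 + (q 3) ^ 2))⁻¹ * u 1,
    -(ε * Real.sqrt ((q 1) ^ 2 + (q 3) ^ 2) * u 0),
    (ε * Real.sqrt ((q 1) ^ 2 + (q 3) ^ 2))⁻¹ * u 3,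
    -(ε * Real.sqrt ((q 1) ^ 2 + (q 3) ^ 2) * u 2)]

/-- The cylindrical almost-complex structure `Ĵ` on the source `(τ, θ, r, φ)`,
determined by `Ĵ ∂_τ = ε⁻¹(cos φ ∂_θ + sin φ ∂_r)`,
`Ĵ(cos φ ∂_θ + sin φ ∂_r) = −ε ∂_τ`, `Ĵ(sin φ ∂_θ − cos φ ∂_r) = ε ∂_φ`,
`Ĵ ∂_φ = −ε⁻¹(sin φ ∂_θ − cos φ ∂_r)`; in particular `Ĵ` sends `∂_τ` to the
Reeb vector field of `α = ε(cos φ dθ + sin φ dr)`. -/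
def Jhat (ε : ℝ) (p : Fin 4 → ℝ) (u : Fin 4 → ℝ) : Fin 4 → ℝ :=
  ![-(ε * (Real.cos (p 3) * u 1 + Real.sin (p 3) * u 2)),
    ε⁻¹ * (Real.cos (p 3) * u 0 - Real.sin (p 3) * u 3),
    ε⁻¹ * (Real.sin (p 3) * u 0 + Real.cos (p 3) * u 3),
    ε * (Real.sin (p 3) * u 1 - Real.cos (p 3) * u 2)]

/-! Writing `ρ = ε e^τ`, the differential of `ι` is the identity in the `(θ, r)` directions and
the derivative of the polar map `(τ, φ) ↦ ρ (cos φ, sin φ)`, i.e. rotation by `φ` scaled by `ρ`,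
in the `(τ, φ)` directions. Since `‖(t, s)‖ = ρ` on the image, `J₀` exchanges the two factors with
weights `ε ρ` and `(ε ρ)⁻¹`, and both sides of the identity reduce to the same expression
by `cos² φ + sin² φ = 1`. -/

open Real ContinuousLinearMap

section Iota

variable {ε : ℝ} {p : Fin 4 → ℝ}

theorem hasFDerivAt_iota :
    HasFDerivAt (iota ε)
      (pi ![(proj 1 : (Fin 4 → ℝ) →L[ℝ] ℝ),
        (ε * exp (p 0)) • (cos (p 3) • proj 0 - sin (p 3) • proj 3),
        proj (2 : Fin 4),
        (ε * exp (p 0)) • (sin (p 3) • proj 0 + cos (p 3) • proj 3)]) p := by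
  have hτ := hasFDerivAt_apply (𝕜 := ℝ) (0 : Fin 4) p
  have hφ := hasFDerivAt_apply (𝕜 := ℝ) (3 : Fin 4) p
  refine hasFDerivAt_pi'' fun i ↦ ?_
  fin_cases i
  · exact hasFDerivAt_apply 1 p
  · exact ((hτ.exp.const_mul ε).mul hφ.cos).congr_fderiv (by ext w; simp; ring)
  · exact hasFDerivAt_apply 2 p
  · exact ((hτ.exp.const_mul ε).mul hφ.sin).congr_fderiv (by ext w; simp; ring)

theorem fderiv_iota_apply (w : Fin 4 → ℝ) :
    fderiv ℝ (iota ε) p w =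
      ![w 1, ε * exp (p 0) * (cos (p 3) * w 0 - sin (p 3) * w 3),
        w 2, ε * exp (p 0) * (sin (p 3) * w 0 + cos (p 3) * w 3)] := by
  rw [hasFDerivAt_iota.fderiv]
  ext i
  fin_cases i <;> simp [mul_add, mul_sub]

theorem sqrt_iota_one_sq_add_iota_three_sq (hε : 0 ≤ ε) :
    √(iota ε p 1 ^ 2 + iota ε p 3 ^ 2) = ε * exp (p 0) := by
  have hsq : iota ε p 1 ^ 2 + iota ε p 3 ^ 2 = (ε * exp (p 0)) ^ 2 := by
    simp only [iota, Matrix.cons_val]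
    linear_combination (ε * exp (p 0)) ^ 2 * cos_sq_add_sin_sq (p 3)
  rw [hsq, sqrt_sq (by positivity)]

end Iota

theorem J0_cylindrical_general (ε : ℝ) (hε : 0 < ε)
    (p : Fin 4 → ℝ) :
    ∀ v : Fin 4 → ℝ,
      fderiv ℝ (iota ε) p (Jhat ε p v)
        = J0cyl ε (iota ε p) (fderiv ℝ (iota ε) p v) := by
  intro v
  have hρ : ε * exp (p 0) ≠ 0 := by positivity
  have hε' : ε ≠ 0 := hε.ne'
  rw [fderiv_iota_apply, fderiv_iota_apply, J0cyl, sqrt_iota_one_sq_add_iota_three_sq hε.le]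
  ext i
  fin_cases i <;> simp only [Jhat, Matrix.cons_val_zero, Matrix.cons_val_one, Matrix.cons_val,
    Fin.zero_eta, Fin.mk_one, Fin.reduceFinMk, mul_neg, mul_inv_rev] <;> field_simp
  · linear_combination (-v 1) * cos_sq_add_sin_sq (p 3)
  · linear_combination (-v 2) * sin_sq_add_cos_sq (p 3)

/-- Lemma 2.14 (with corrected conventions): on the negative end `{τ ≤ 0}`
the embedding `ι` intertwines the cylindrical almost-complex structure `Ĵ`
with `J₀`, i.e. `Dι(p) ∘ Ĵ_p = J₀(ι(p)) ∘ Dι(p)`. -/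
theorem J0_cylindrical (ε : ℝ) (hε : 0 < ε)
    (p : Fin 4 → ℝ) (hτ : p 0 ≤ 0) :
    ∀ v : Fin 4 → ℝ,
      fderiv ℝ (iota ε) p (Jhat ε p v)
        = J0cyl ε (iota ε p) (fderiv ℝ (iota ε) p v) :=
  J0_cylindrical_general ε hε p
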